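/- arXiv:2207.01915 — 3 statements merged into one kernel-verified Lean document; each statement's English description precedes it below -/
import Mathlib

section
/- Let A be a bounded operator on a complex Hilbert space H and α ∈ [0,1]. Then for all x, y ∈ H, |⟨Ax,y⟩|² ≤ ⟨|A|^{2α}x,x⟩ · ⟨|A*|^{2(1−α)}y,y⟩ (Kato's inequality). -/
/-- The numerical radius of a bounded operator on a complex Hilbert space. -/
noncomputable def numRad {H : Type*} [NormedAddCommGroup H] [InnerProductSpace ℂ H]
    (A : H →L[ℂ] H) : ℝ :=
  ⨆ x : {x : H // ‖x‖ = 1}, ‖(inner ℂ (A x.1) x.1 : ℂ)‖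

/-- The modulus `|A| = (A*A)^{1/2}`, via continuous functional calculus. -/
noncomputable def absOp {H : Type*} [NormedAddCommGroup H] [InnerProductSpace ℂ H]
    [CompleteSpace H] (A : H →L[ℂ] H) : H →L[ℂ] H :=
  cfc Real.sqrt (ContinuousLinearMap.adjoint A * A)

variable {H : Type*} [NormedAddCommGroup H] [InnerProductSpace ℂ H] [CompleteSpace H]

/-!
With `S = A†A` and `T = AA†`, the regularised powers `P = (S + ε)^{α/2}` and
`Q = (S + ε)^{-α/2}` factor `A = (A Q) P`, so Cauchy–Schwarz gives
`|⟪A x, y⟫|² ≤ ⟪(S + ε)^α x, x⟫ ⟪A Q² A† y, y⟫`. In place of the polar decomposition,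
`A` intertwines `S` and `T`, hence `A f(S) A† = f(T) T` for continuous `f`, and
`A Q² A† = (T + ε)^{-α} T ≤ T^{1-α}`. Finally `(t + ε)^α → t^α` uniformly on the spectrum
of `S` as `ε → 0`, and `(|A|^2)^α = S^α`, `(|A†|^2)^{1-α} = T^{1-α}`.
-/

open ContinuousLinearMap Filter Topology RCLike

section ContinuousFunctionalCalculus

variable {𝓐 : Type*} [Ring 𝓐] [StarRing 𝓐] [Algebra ℝ 𝓐] [TopologicalSpace 𝓐]
  [ContinuousFunctionalCalculus ℝ 𝓐 IsSelfAdjoint]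

theorem SemiconjBy.cfc_real [IsTopologicalRing 𝓐] [T2Space 𝓐] {x a b : 𝓐}
    (h : SemiconjBy x a b) (ha : IsSelfAdjoint a) (hb : IsSelfAdjoint b) {f : ℝ → ℝ}
    (hf : ContinuousOn f (spectrum ℝ a ∪ spectrum ℝ b)) :
    SemiconjBy x (cfc f a) (cfc f b) := by
  set s := spectrum ℝ a ∪ spectrum ℝ b
  have : CompactSpace s := isCompact_iff_compactSpace.mp
    ((ContinuousFunctionalCalculus.isCompact_spectrum a).union
      (ContinuousFunctionalCalculus.isCompact_spectrum b))
  have hsa : spectrum ℝ a ⊆ s := Set.subset_union_left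
  have hsb : spectrum ℝ b ⊆ s := Set.subset_union_right
  have key (g : C(s, ℝ)) :
      SemiconjBy x (cfcHomSuperset ha hsa g) (cfcHomSuperset hb hsb g) := by
    induction g using ContinuousMap.induction_on_of_compact with
    | const r =>
      have : ContinuousMap.const s r = algebraMap ℝ C(s, ℝ) r := rfl
      simp only [this, AlgHomClass.commutes]
      exact Algebra.commute_algebraMap_right r x
    | id => simpa only [cfcHomSuperset_id] using h
    | star_id => simpa only [map_star, cfcHomSuperset_id, ha.star_eq, hb.star_eq] using h
    | add f g hf hg => simpa only [map_add] using hf.add_right hg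
    | mul f g hf hg => simpa only [map_mul] using hf.mul_right hg
    | frequently f hf =>
      have hclosed : IsClosed
          {g : C(s, ℝ) | SemiconjBy x (cfcHomSuperset ha hsa g) (cfcHomSuperset hb hsb g)} :=
        isClosed_eq (continuous_const.mul (cfcHomSuperset_continuous ha hsa))
          ((cfcHomSuperset_continuous hb hsb).mul continuous_const)
      exact hclosed.closure_subset (mem_closure_of_frequently_of_tendsto hf tendsto_id)
  convert key ⟨s.domRestrict f, hf.domRestrict⟩ using 1
  · rw [cfcHomSuperset_apply, cfc_apply f a ha (hf.mono hsa)]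
    rfl
  · rw [cfcHomSuperset_apply, cfc_apply f b hb (hf.mono hsb)]
    rfl

theorem tendsto_cfc_add_rpow_const (a : 𝓐) {α : ℝ} (hα : 0 ≤ α) :
    Tendsto (fun ε : ℝ => cfc (fun t : ℝ => (t + ε) ^ α) a) (𝓝 0)
      (𝓝 (cfc (fun t : ℝ => t ^ α) a)) := by
  have : CompactSpace (spectrum ℝ a) :=
    isCompact_iff_compactSpace.mp (ContinuousFunctionalCalculus.isCompact_spectrum a)
  set F : ℝ → spectrum ℝ a → ℝ := fun ε t => ((t : ℝ) + ε) ^ α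
  have hF : Continuous ↿F :=
    (continuous_subtype_val.comp continuous_snd |>.add continuous_fst).rpow_const
      fun _ => Or.inr hα
  refine tendsto_cfc_fun ?_ (Eventually.of_forall fun ε => ?_)
  · rw [tendstoUniformlyOn_iff_tendstoUniformly_comp_coe]
    simpa [F, Function.comp_def] using Continuous.tendstoUniformly F hF 0
  · exact ((continuous_id.add continuous_const).rpow_const fun _ => Or.inr hα).continuousOn

end ContinuousFunctionalCalculus

theorem continuousOn_add_rpow_const {ε : ℝ} (hε : 0 < ε) (r : ℝ) :
    ContinuousOn (fun t : ℝ => (t + ε) ^ r) (Set.Ici 0) := fun _ ht =>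
  ((continuous_id.add continuous_const).continuousAt.rpow_const
    (Or.inl (add_pos_of_nonneg_of_pos ht hε).ne')).continuousWithinAt

theorem add_rpow_neg_mul_le_rpow_one_sub {t ε α : ℝ} (ht : 0 ≤ t) (hε : 0 ≤ ε) (hα : 0 ≤ α) :
    (t + ε) ^ (-α) * t ≤ t ^ (1 - α) := by
  rcases ht.eq_or_lt with rfl | ht
  · simpa using Real.rpow_nonneg le_rfl (1 - α)
  calc (t + ε) ^ (-α) * t ≤ t ^ (-α) * t := mul_le_mul_of_nonneg_right
        (Real.rpow_le_rpow_of_nonpos ht (le_add_of_nonneg_right hε) (neg_nonpos.2 hα)) ht.le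
    _ = t ^ (1 - α) := by rw [← Real.rpow_add_one ht.ne', neg_add_eq_sub]

section CStarAlgebra

variable {𝓐 : Type*} [CStarAlgebra 𝓐] [PartialOrder 𝓐] [StarOrderedRing 𝓐]

theorem mul_cfc_star_mul_self_mul_star (a : 𝓐) {g : ℝ → ℝ} (hg : ContinuousOn g (Set.Ici 0)) :
    a * cfc g (star a * a) * star a = cfc (fun t => g t * t) (a * star a) := by
  have hS := star_mul_self_nonneg a
  have hT := mul_star_self_nonneg a
  have hsub : spectrum ℝ (star a * a) ∪ spectrum ℝ (a * star a) ⊆ Set.Ici 0 :=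
    Set.union_subset (fun _ ht => spectrum_nonneg_of_nonneg hS ht)
      (fun _ ht => spectrum_nonneg_of_nonneg hT ht)
  have hsemi : SemiconjBy a (star a * a) (a * star a) := (mul_assoc a (star a) a).symm
  rw [(hsemi.cfc_real hS.isSelfAdjoint hT.isSelfAdjoint (hg.mono hsub)).eq, mul_assoc,
    cfc_mul g (fun t => t) (a * star a) (hg.mono (Set.subset_union_right.trans hsub)),
    cfc_id' ℝ (a * star a)]

theorem cfc_add_rpow_mul_cfc_add_rpow {a : 𝓐} (ha : 0 ≤ a) {ε : ℝ} (hε : 0 < ε) (r s : ℝ) :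
    cfc (fun t : ℝ => (t + ε) ^ r) a * cfc (fun t : ℝ => (t + ε) ^ s) a =
      cfc (fun t : ℝ => (t + ε) ^ (r + s)) a := by
  have hspec : spectrum ℝ a ⊆ Set.Ici 0 := fun _ ht => spectrum_nonneg_of_nonneg ha ht
  rw [← cfc_mul _ _ a ((continuousOn_add_rpow_const hε r).mono hspec)
    ((continuousOn_add_rpow_const hε s).mono hspec)]
  exact cfc_congr fun t ht =>
    (Real.rpow_add (add_pos_of_nonneg_of_pos (hspec ht) hε) r s).symm

theorem cfc_rpow_two_mul_sqrt {a : 𝓐} (ha : 0 ≤ a) {c : ℝ} (hc : 0 ≤ c) :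
    cfc (fun t : ℝ => t ^ (2 * c)) (cfc Real.sqrt a) = cfc (fun t : ℝ => t ^ c) a := by
  rw [← cfc_comp (fun t : ℝ => t ^ (2 * c)) Real.sqrt a]
  refine cfc_congr fun t ht => ?_
  rw [Function.comp_apply, Real.sqrt_eq_rpow, ← Real.rpow_mul (spectrum_nonneg_of_nonneg ha ht)]
  ring_nf

end CStarAlgebra

section InnerProductSpace

variable {𝕜 E : Type*} [RCLike 𝕜] [NormedAddCommGroup E] [InnerProductSpace 𝕜 E]

theorem re_inner_le_re_inner_of_le {B C : E →L[𝕜] E} (h : B ≤ C) (v : E) :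
    re (inner 𝕜 (B v) v : 𝕜) ≤ re (inner 𝕜 (C v) v : 𝕜) := by
  have := ((le_def B C).mp h).re_inner_nonneg_left v
  rwa [sub_apply, inner_sub_left, map_sub, sub_nonneg] at this

theorem norm_inner_mul_apply_sq_le [CompleteSpace E] (B C : E →L[𝕜] E) (x y : E) :
    ‖(inner 𝕜 ((B * C) x) y : 𝕜)‖ ^ 2 ≤
      re (inner 𝕜 ((adjoint C * C) x) x : 𝕜) * re (inner 𝕜 ((B * adjoint B) y) y : 𝕜) := by
  calc ‖(inner 𝕜 ((B * C) x) y : 𝕜)‖ ^ 2 = ‖(inner 𝕜 (C x) (adjoint B y) : 𝕜)‖ ^ 2 := by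
        rw [adjoint_inner_right]; rfl
    _ ≤ (‖C x‖ * ‖adjoint B y‖) ^ 2 := by gcongr; exact norm_inner_le_norm _ _
    _ = ‖C x‖ ^ 2 * ‖adjoint B y‖ ^ 2 := mul_pow ..
    _ = _ := by
        rw [apply_norm_sq_eq_inner_adjoint_left, apply_norm_sq_eq_inner_adjoint_left,
          adjoint_adjoint]
        rfl

end InnerProductSpace

theorem norm_inner_apply_sq_le_regularized (A : H →L[ℂ] H) {α : ℝ} (hα0 : 0 ≤ α) (hα1 : α ≤ 1)
    {ε : ℝ} (hε : 0 < ε) (x y : H) :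
    ‖(inner ℂ (A x) y : ℂ)‖ ^ 2 ≤
      (inner ℂ (cfc (fun t : ℝ => (t + ε) ^ α) (adjoint A * A) x) x : ℂ).re *
        (inner ℂ (cfc (fun t : ℝ => t ^ (1 - α)) (A * adjoint A) y) y : ℂ).re := by
  set S := adjoint A * A
  have hS : 0 ≤ S := star_mul_self_nonneg A
  have hT : 0 ≤ A * adjoint A := mul_star_self_nonneg A
  have hpow := cfc_add_rpow_mul_cfc_add_rpow hS hε
  set P := cfc (fun t : ℝ => (t + ε) ^ (α / 2)) S
  set Q := cfc (fun t : ℝ => (t + ε) ^ (-(α / 2))) S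
  have hA : A = A * Q * P := by
    rw [mul_assoc, hpow, neg_add_cancel]
    simp only [Real.rpow_zero]
    rw [cfc_const_one ℝ S, mul_one]
  have hP : adjoint P * P = cfc (fun t : ℝ => (t + ε) ^ α) S := by
    rw [← star_eq_adjoint, (cfc_predicate _ _ : IsSelfAdjoint P).star_eq, hpow, add_halves]
  have hQ : A * Q * adjoint (A * Q) = cfc (fun t : ℝ => (t + ε) ^ (-α) * t) (A * adjoint A) := by
    rw [← star_eq_adjoint, star_mul, (cfc_predicate _ _ : IsSelfAdjoint Q).star_eq, mul_assoc,
      ← mul_assoc Q, hpow, ← neg_add, add_halves, ← mul_assoc]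
    exact mul_cfc_star_mul_self_mul_star A (continuousOn_add_rpow_const hε _)
  have hQ_le : cfc (fun t : ℝ => (t + ε) ^ (-α) * t) (A * adjoint A) ≤
      cfc (fun t : ℝ => t ^ (1 - α)) (A * adjoint A) :=
    cfc_mono (fun t ht => add_rpow_neg_mul_le_rpow_one_sub (spectrum_nonneg_of_nonneg hT ht)
        hε.le hα0)
      (((continuousOn_add_rpow_const hε _).mul continuousOn_id).mono
        fun _ ht => spectrum_nonneg_of_nonneg hT ht)
      (Real.continuous_rpow_const (sub_nonneg.2 hα1)).continuousOn
  have hP_nonneg : 0 ≤ cfc (fun t : ℝ => (t + ε) ^ α) S := cfc_nonneg fun t ht =>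
    Real.rpow_nonneg (add_nonneg (spectrum_nonneg_of_nonneg hS ht) hε.le) α
  calc ‖(inner ℂ (A x) y : ℂ)‖ ^ 2 = ‖(inner ℂ ((A * Q * P) x) y : ℂ)‖ ^ 2 := by rw [← hA]
    _ ≤ (inner ℂ ((adjoint P * P) x) x : ℂ).re *
          (inner ℂ ((A * Q * adjoint (A * Q)) y) y : ℂ).re :=
        norm_inner_mul_apply_sq_le _ _ _ _
    _ ≤ _ := by
        rw [hP, hQ]
        exact mul_le_mul_of_nonneg_left (re_inner_le_re_inner_of_le hQ_le y)
          (((nonneg_iff_isPositive _).mp hP_nonneg).re_inner_nonneg_left x)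

theorem stmt7 (A : H →L[ℂ] H) (α : ℝ) (hα : α ∈ Set.Icc (0 : ℝ) 1) (x y : H) :
    ‖(inner ℂ (A x) y : ℂ)‖ ^ 2 ≤
      ((inner ℂ ((cfc (fun t : ℝ => t ^ (2 * α)) (absOp A)) x) x : ℂ)).re *
        ((inner ℂ ((cfc (fun t : ℝ => t ^ (2 * (1 - α)))
          (absOp (ContinuousLinearMap.adjoint A))) y) y : ℂ)).re := by
  obtain ⟨hα0, hα1⟩ := hα
  rw [absOp, absOp, adjoint_adjoint,
    cfc_rpow_two_mul_sqrt (show 0 ≤ adjoint A * A from star_mul_self_nonneg A) hα0,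
    cfc_rpow_two_mul_sqrt (show 0 ≤ A * adjoint A from mul_star_self_nonneg A) (sub_nonneg.2 hα1)]
  have hform : Continuous fun B : H →L[ℂ] H => (inner ℂ (B x) x : ℂ).re := by fun_prop
  have hlim := ((hform.tendsto _).comp (tendsto_cfc_add_rpow_const (adjoint A * A) hα0)).mul_const
    (inner ℂ (cfc (fun t : ℝ => t ^ (1 - α)) (A * adjoint A) y) y : ℂ).re
  exact ge_of_tendsto (hlim.mono_left (nhdsWithin_le_nhds (s := Set.Ioi 0)))
    (eventually_nhdsWithin_of_forall fun _ hε =>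
      norm_inner_apply_sq_le_regularized A hα0 hα1 hε x y)
end

section
/- Let A, B, X ∈ B(H), r ≥ 2, and φ, ψ mutually complementary Orlicz functions. Then w(A*XB)^r ≤ ‖X‖^r · w(φ(|A|^r) + ψ(|B|^r)). -/
/-- An Orlicz function: convex, continuous, non-decreasing on `[0, ∞)`,
vanishing at `0`, positive on `(0, ∞)`, and tending to infinity. -/
def IsOrliczFunction (φ : ℝ → ℝ) : Prop :=
  ConvexOn ℝ (Set.Ici 0) φ ∧ ContinuousOn φ (Set.Ici 0) ∧ MonotoneOn φ (Set.Ici 0) ∧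
    φ 0 = 0 ∧ (∀ u : ℝ, 0 < u → 0 < φ u) ∧ Filter.Tendsto φ Filter.atTop Filter.atTop

variable {H : Type*} [NormedAddCommGroup H] [InnerProductSpace ℂ H] [CompleteSpace H]

/-!
For a unit vector `x`, `|⟪A* X B x, x⟫| ≤ ‖X‖ ‖A x‖ ‖B x‖`. Since `r ≥ 2`, the Hölder–McCarthy
inequality `‖A x‖ ^ r ≤ ⟪|A| ^ r x, x⟫` (Jensen for the convex map `t ↦ t ^ (r / 2)` applied to
`A* A`) bounds the right side by `‖X‖ ^ r ⟪|A| ^ r x, x⟫ ⟪|B| ^ r x, x⟫`. Young's inequality for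
`φ, ψ` followed by Jensen's inequality `φ ⟪T x, x⟫ ≤ ⟪φ(T) x, x⟫` for the convex, monotone Orlicz
functions turns the product into `⟪(φ(|A| ^ r) + ψ(|B| ^ r)) x, x⟫`, which is at most the
numerical radius. Take the supremum over `x`.
-/

open Set RCLike ContinuousLinearMap
open scoped InnerProductSpace

theorem ConvexOn.add_rightDeriv_mul_sub_le {S : Set ℝ} {f : ℝ → ℝ} (hf : ConvexOn ℝ S f)
    {x y : ℝ} (hx : x ∈ interior S) (hy : y ∈ S) :
    f x + derivWithin f (Ioi x) x * (y - x) ≤ f y := by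
  rcases lt_trichotomy y x with hyx | rfl | hxy
  · have hslope : slope f y x ≤ derivWithin f (Ioi x) x :=
      (hf.slope_le_leftDeriv_of_mem_interior hy hx hyx).trans
        (hf.leftDeriv_le_rightDeriv_of_mem_interior hx)
    rw [slope_def_field, div_le_iff₀ (sub_pos.2 hyx)] at hslope
    linarith
  · simp
  · have hslope := hf.rightDeriv_le_slope_of_mem_interior hx hy hxy
    rw [slope_def_field, le_div_iff₀ (sub_pos.2 hxy)] at hslope
    linarith

theorem ConvexOn.exists_affine_le_of_monotoneOn_Ici {f : ℝ → ℝ} (hconv : ConvexOn ℝ (Ici 0) f)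
    (hmono : MonotoneOn f (Ici 0)) {x : ℝ} (hx : 0 ≤ x) :
    ∃ a : ℝ, ∀ y, 0 ≤ y → f x + a * (y - x) ≤ f y := by
  rcases hx.eq_or_lt with rfl | hx
  · exact ⟨0, fun y hy => by simpa using hmono (mem_Ici.2 le_rfl) (mem_Ici.2 hy) hy⟩
  · refine ⟨_, fun y hy => hconv.add_rightDeriv_mul_sub_le ?_ (mem_Ici.2 hy)⟩
    rwa [interior_Ici]

theorem re_inner_le_re_inner_of_le_s9 {E : Type*} [NormedAddCommGroup E] [InnerProductSpace ℂ E]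
    {S T : E →L[ℂ] E} (h : S ≤ T) (x : E) :
    re ⟪S x, x⟫_ℂ ≤ re ⟪T x, x⟫_ℂ := by
  have := ((ContinuousLinearMap.le_def S T).1 h).re_inner_nonneg_left x
  rw [sub_apply, inner_sub_left, map_sub] at this
  linarith

theorem re_inner_algebraMap_add_smul_apply {E : Type*} [NormedAddCommGroup E]
    [InnerProductSpace ℂ E] (c a : ℝ) (T : E →L[ℂ] E) {x : E} (hx : ‖x‖ = 1) :
    re ⟪(algebraMap ℝ (E →L[ℂ] E) c + a • T) x, x⟫_ℂ = c + a * re ⟪T x, x⟫_ℂ := by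
  simp [Algebra.algebraMap_eq_smul_one, ← Complex.coe_smul, inner_self_eq_norm_sq_to_K, hx,
    mul_comm]

/-- Jensen's inequality for a vector state: the affine minorant touching `f` at the state's value
survives the monotone functional calculus, and its own state is that value. -/
theorem apply_re_inner_le_re_inner_cfc {T : H →L[ℂ] H} (hT : IsSelfAdjoint T) {f : ℝ → ℝ}
    (hf : ContinuousOn f (spectrum ℝ T)) {x : H} (hx : ‖x‖ = 1) {a : ℝ}
    (haff : ∀ t ∈ spectrum ℝ T, f (re ⟪T x, x⟫_ℂ) + a * (t - re ⟪T x, x⟫_ℂ) ≤ f t) :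
    f (re ⟪T x, x⟫_ℂ) ≤ re ⟪cfc f T x, x⟫_ℂ := by
  set t₀ := re ⟪T x, x⟫_ℂ
  have hcfc : cfc (fun t => (f t₀ - a * t₀) + a * t) T
      = algebraMap ℝ (H →L[ℂ] H) (f t₀ - a * t₀) + a • T := by
    rw [cfc_const_add _ _ _ (by fun_prop) hT, cfc_const_mul_id a T hT]
  have hle : cfc (fun t => (f t₀ - a * t₀) + a * t) T ≤ cfc f T :=
    cfc_mono (fun t ht => by linarith [haff t ht]) (by fun_prop) hf
  rw [hcfc] at hle
  calc f t₀ = re ⟪(algebraMap ℝ (H →L[ℂ] H) (f t₀ - a * t₀) + a • T) x, x⟫_ℂ := by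
        rw [re_inner_algebraMap_add_smul_apply _ _ _ hx]; ring
    _ ≤ re ⟪cfc f T x, x⟫_ℂ := re_inner_le_re_inner_of_le_s9 hle x

theorem ConvexOn.apply_re_inner_le_re_inner_cfc {T : H →L[ℂ] H} (hT : 0 ≤ T) {f : ℝ → ℝ}
    (hconv : ConvexOn ℝ (Ici 0) f) (hcont : ContinuousOn f (Ici 0))
    (hmono : MonotoneOn f (Ici 0)) {x : H} (hx : ‖x‖ = 1) :
    f (re ⟪T x, x⟫_ℂ) ≤ re ⟪cfc f T x, x⟫_ℂ := by
  have hspec : spectrum ℝ T ⊆ Ici 0 := fun t ht => spectrum_nonneg_of_nonneg hT ht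
  obtain ⟨a, ha⟩ := hconv.exists_affine_le_of_monotoneOn_Ici hmono
    (((nonneg_iff_isPositive T).1 hT).re_inner_nonneg_left x)
  exact _root_.apply_re_inner_le_re_inner_cfc hT.isSelfAdjoint (hcont.mono hspec) hx
    fun t ht => ha t (hspec ht)

theorem adjoint_mul_self_nonneg (A : H →L[ℂ] H) : 0 ≤ adjoint A * A := by
  simpa [star_eq_adjoint] using star_mul_self_nonneg A

theorem absOp_nonneg (A : H →L[ℂ] H) : 0 ≤ absOp A :=
  cfc_nonneg fun t _ => Real.sqrt_nonneg t

theorem cfc_rpow_absOp_nonneg (A : H →L[ℂ] H) (r : ℝ) : 0 ≤ cfc (fun t : ℝ => t ^ r) (absOp A) :=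
  cfc_nonneg fun _ ht => Real.rpow_nonneg (spectrum_nonneg_of_nonneg (absOp_nonneg A) ht) r

theorem cfc_rpow_absOp (A : H →L[ℂ] H) {r : ℝ} (hr : 0 ≤ r) :
    cfc (fun t : ℝ => t ^ r) (absOp A) = cfc (fun t : ℝ => t ^ (r / 2)) (adjoint A * A) := by
  rw [absOp, ← cfc_comp _ _ _ (adjoint_mul_self_nonneg A).isSelfAdjoint
    (Real.continuous_rpow_const hr).continuousOn]
  refine cfc_congr fun t ht => ?_
  rw [Function.comp_apply, Real.sqrt_eq_rpow,
    ← Real.rpow_mul (spectrum_nonneg_of_nonneg (adjoint_mul_self_nonneg A) ht)]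
  ring_nf

theorem norm_apply_rpow_le_re_inner_cfc_rpow_absOp (A : H →L[ℂ] H) {r : ℝ} (hr : 2 ≤ r) {x : H}
    (hx : ‖x‖ = 1) : ‖A x‖ ^ r ≤ re ⟪cfc (fun t : ℝ => t ^ r) (absOp A) x, x⟫_ℂ := by
  have hr2 : 1 ≤ r / 2 := by linarith
  have hjensen := (convexOn_rpow hr2).apply_re_inner_le_re_inner_cfc (adjoint_mul_self_nonneg A)
    (Real.continuous_rpow_const (by linarith)).continuousOn
    (fun s hs _ _ hst => Real.rpow_le_rpow hs hst (by linarith)) hx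
  have hquad : re ⟪(adjoint A * A) x, x⟫_ℂ = ‖A x‖ ^ 2 := by
    rw [mul_apply_eq_comp, adjoint_inner_left, inner_self_eq_norm_sq]
  calc ‖A x‖ ^ r = (‖A x‖ ^ 2) ^ (r / 2) := by
        rw [← Real.rpow_two, ← Real.rpow_mul (norm_nonneg _)]; ring_nf
    _ ≤ re ⟪cfc (fun t : ℝ => t ^ (r / 2)) (adjoint A * A) x, x⟫_ℂ := hquad ▸ hjensen
    _ = re ⟪cfc (fun t : ℝ => t ^ r) (absOp A) x, x⟫_ℂ := by rw [cfc_rpow_absOp A (by linarith)]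

theorem re_inner_mul_re_inner_le_re_inner_cfc_add_cfc {S T : H →L[ℂ] H} (hS : 0 ≤ S)
    (hT : 0 ≤ T) {φ ψ : ℝ → ℝ} (hφ : IsOrliczFunction φ) (hψ : IsOrliczFunction ψ)
    (hyoung : ∀ u v : ℝ, 0 ≤ u → 0 ≤ v → u * v ≤ φ u + ψ v) {x : H} (hx : ‖x‖ = 1) :
    re ⟪S x, x⟫_ℂ * re ⟪T x, x⟫_ℂ ≤ re ⟪(cfc φ S + cfc ψ T) x, x⟫_ℂ := by
  obtain ⟨hφconv, hφcont, hφmono, -⟩ := hφ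
  obtain ⟨hψconv, hψcont, hψmono, -⟩ := hψ
  calc re ⟪S x, x⟫_ℂ * re ⟪T x, x⟫_ℂ ≤ φ (re ⟪S x, x⟫_ℂ) + ψ (re ⟪T x, x⟫_ℂ) :=
        hyoung _ _ (((nonneg_iff_isPositive S).1 hS).re_inner_nonneg_left x)
          (((nonneg_iff_isPositive T).1 hT).re_inner_nonneg_left x)
    _ ≤ re ⟪cfc φ S x, x⟫_ℂ + re ⟪cfc ψ T x, x⟫_ℂ :=
        add_le_add (hφconv.apply_re_inner_le_re_inner_cfc hS hφcont hφmono hx)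
          (hψconv.apply_re_inner_le_re_inner_cfc hT hψcont hψmono hx)
    _ = re ⟪(cfc φ S + cfc ψ T) x, x⟫_ℂ := by rw [add_apply, inner_add_left, map_add]

theorem numRad_nonneg {E : Type*} [NormedAddCommGroup E] [InnerProductSpace ℂ E]
    (S : E →L[ℂ] E) : 0 ≤ numRad S :=
  Real.iSup_nonneg fun _ => norm_nonneg _

theorem norm_inner_le_numRad {E : Type*} [NormedAddCommGroup E] [InnerProductSpace ℂ E]
    (S : E →L[ℂ] E) {x : E} (hx : ‖x‖ = 1) : ‖⟪S x, x⟫_ℂ‖ ≤ numRad S := by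
  refine le_ciSup (f := fun y : {y : E // ‖y‖ = 1} => ‖⟪S y, y⟫_ℂ‖) ⟨‖S‖, ?_⟩ ⟨x, hx⟩
  rintro _ ⟨⟨y, hy⟩, rfl⟩
  calc ‖⟪S y, y⟫_ℂ‖ ≤ ‖S y‖ * ‖y‖ := norm_inner_le_norm _ _
    _ ≤ ‖S‖ * ‖y‖ * ‖y‖ := by gcongr; exact S.le_opNorm y
    _ = ‖S‖ := by rw [hy, mul_one, mul_one]

theorem numRad_rpow_le {E : Type*} [NormedAddCommGroup E] [InnerProductSpace ℂ E]
    {S : E →L[ℂ] E} {r c : ℝ} (hr : 0 < r) (hc : 0 ≤ c)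
    (h : ∀ x : E, ‖x‖ = 1 → ‖⟪S x, x⟫_ℂ‖ ^ r ≤ c) : numRad S ^ r ≤ c := by
  refine (Real.le_rpow_inv_iff_of_pos (numRad_nonneg S) hc hr).1 ?_
  exact Real.iSup_le (fun x => (Real.le_rpow_inv_iff_of_pos (norm_nonneg _) hc hr).2 (h x x.2))
    (Real.rpow_nonneg hc _)

theorem norm_inner_adjoint_mul_mul_apply_le (A X B : H →L[ℂ] H) (x : H) :
    ‖⟪(adjoint A * X * B) x, x⟫_ℂ‖ ≤ ‖X‖ * (‖A x‖ * ‖B x‖) := by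
  rw [mul_apply_eq_comp, mul_apply_eq_comp, adjoint_inner_left]
  calc ‖⟪X (B x), A x⟫_ℂ‖ ≤ ‖X (B x)‖ * ‖A x‖ := norm_inner_le_norm _ _
    _ ≤ ‖X‖ * ‖B x‖ * ‖A x‖ := by gcongr; exact X.le_opNorm _
    _ = ‖X‖ * (‖A x‖ * ‖B x‖) := by ring

theorem stmt9 (A B X : H →L[ℂ] H) (r : ℝ) (hr : 2 ≤ r)
    (φ ψ : ℝ → ℝ) (hφ : IsOrliczFunction φ) (hψ : IsOrliczFunction ψ)
    (hyoung : ∀ u v : ℝ, 0 ≤ u → 0 ≤ v → u * v ≤ φ u + ψ v) :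
    numRad (ContinuousLinearMap.adjoint A * X * B) ^ r ≤
      ‖X‖ ^ r * numRad (cfc φ (cfc (fun t : ℝ => t ^ r) (absOp A)) +
        cfc ψ (cfc (fun t : ℝ => t ^ r) (absOp B))) := by
  set P := cfc (fun t : ℝ => t ^ r) (absOp A)
  set Q := cfc (fun t : ℝ => t ^ r) (absOp B)
  have hP : 0 ≤ P := cfc_rpow_absOp_nonneg A r
  have hQ : 0 ≤ Q := cfc_rpow_absOp_nonneg B r
  refine numRad_rpow_le (by linarith) (mul_nonneg (by positivity) (numRad_nonneg _)) fun x hx => ?_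
  calc ‖⟪(adjoint A * X * B) x, x⟫_ℂ‖ ^ r ≤ (‖X‖ * (‖A x‖ * ‖B x‖)) ^ r := by
        gcongr; exact norm_inner_adjoint_mul_mul_apply_le A X B x
    _ = ‖X‖ ^ r * (‖A x‖ ^ r * ‖B x‖ ^ r) := by
        rw [Real.mul_rpow (norm_nonneg _) (by positivity),
          Real.mul_rpow (norm_nonneg _) (norm_nonneg _)]
    _ ≤ ‖X‖ ^ r * (re ⟪P x, x⟫_ℂ * re ⟪Q x, x⟫_ℂ) := by
        gcongr
        · exact ((nonneg_iff_isPositive P).1 hP).re_inner_nonneg_left x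
        · exact norm_apply_rpow_le_re_inner_cfc_rpow_absOp A hr hx
        · exact norm_apply_rpow_le_re_inner_cfc_rpow_absOp B hr hx
    _ ≤ ‖X‖ ^ r * re ⟪(cfc φ P + cfc ψ Q) x, x⟫_ℂ := by
        gcongr; exact re_inner_mul_re_inner_le_re_inner_cfc_add_cfc hP hQ hφ hψ hyoung hx
    _ ≤ ‖X‖ ^ r * numRad (cfc φ P + cfc ψ Q) := by
        gcongr; exact (re_le_norm _).trans (norm_inner_le_numRad _ hx)
end

section
/- Let A ∈ B(H), φ an Orlicz function, and α ∈ (0,1). Then φ(w(A)²) ≤ ‖α·φ(|A|²) + (1−α)·φ(|A*|²)‖. -/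
/-!
For a unit vector `x`, `|⟪A x, x⟫|²` is at most both `‖A x‖² = ⟪A*A x, x⟫` and
`‖A* x‖² = ⟪AA* x, x⟫`. By monotonicity of `φ` and the Jensen inequality
`φ(⟪T x, x⟫) ≤ ⟪φ(T) x, x⟫` for positive `T` (tested against the affine minorants of `φ`),
`φ(|⟪A x, x⟫|²)` is at most both `⟪φ(A*A) x, x⟫` and `⟪φ(AA*) x, x⟫`, hence at most their
`α`-combination, which the operator norm bounds. Continuity of `t ↦ φ(t²)` carries the bound to
the supremum `w(A)`.
-/

open Set RCLike ContinuousLinearMap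
open scoped InnerProductSpace InnerProduct

lemma ContinuousOn.map_ciSup_le_of_nonneg {ι : Sort*} {g : ℝ → ℝ} {f : ι → ℝ} {M : ℝ}
    (hg : ContinuousOn g (Ici 0)) (hf₀ : ∀ i, 0 ≤ f i) (hf : BddAbove (range f))
    (hM : ∀ i, g (f i) ≤ M) (hg₀ : g 0 ≤ M) : g (⨆ i, f i) ≤ M := by
  cases isEmpty_or_nonempty ι
  · rwa [Real.iSup_of_isEmpty]
  · have hclosed : IsClosed (Ici 0 ∩ g ⁻¹' Iic M) :=
      hg.preimage_isClosed_of_isClosed isClosed_Ici isClosed_Iic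
    have hrange : range f ⊆ Ici 0 ∩ g ⁻¹' Iic M := by
      rintro _ ⟨i, rfl⟩
      exact ⟨hf₀ i, hM i⟩
    exact (closure_minimal hrange hclosed (csSup_mem_closure (range_nonempty f) hf)).2

section Operator

variable {H : Type*} [NormedAddCommGroup H] [InnerProductSpace ℂ H]

lemma re_inner_smul_add_smul_apply (S T : H →L[ℂ] H) (a b : ℝ) (x : H) :
    re ⟪(a • S + b • T) x, x⟫_ℂ = a * re ⟪S x, x⟫_ℂ + b * re ⟪T x, x⟫_ℂ := by
  simp

lemma re_inner_apply_le_of_le {S T : H →L[ℂ] H} (h : S ≤ T) (x : H) :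
    re ⟪S x, x⟫_ℂ ≤ re ⟪T x, x⟫_ℂ := by
  have := h.re_inner_nonneg_left x
  rw [sub_apply, inner_sub_left, map_sub] at this
  linarith

lemma re_inner_apply_le_opNorm (T : H →L[ℂ] H) {x : H} (hx : ‖x‖ = 1) :
    re ⟪T x, x⟫_ℂ ≤ ‖T‖ :=
  calc re ⟪T x, x⟫_ℂ ≤ ‖T x‖ * ‖x‖ := re_inner_le_norm _ _
    _ ≤ ‖T‖ := by simpa [hx] using T.le_opNorm x

lemma bddAbove_range_norm_inner_apply_self (A : H →L[ℂ] H) :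
    BddAbove (range fun x : {x : H // ‖x‖ = 1} ↦ ‖⟪A x.1, x.1⟫_ℂ‖) := by
  refine ⟨‖A‖, ?_⟩
  rintro _ ⟨⟨x, hx⟩, rfl⟩
  calc ‖⟪A x, x⟫_ℂ‖ ≤ ‖A x‖ * ‖x‖ := norm_inner_le_norm _ _
    _ ≤ ‖A‖ := by simpa [hx] using A.le_opNorm x

end Operator

variable {H : Type*} [NormedAddCommGroup H] [InnerProductSpace ℂ H] [CompleteSpace H]

theorem ConvexOn.map_re_inner_le_re_inner_cfc {φ : ℝ → ℝ} (hφ : ConvexOn ℝ (Ici 0) φ)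
    (hφc : ContinuousOn φ (Ici 0)) {T : H →L[ℂ] H} (hT : 0 ≤ T) {x : H} (hx : ‖x‖ = 1) :
    φ (re ⟪T x, x⟫_ℂ) ≤ re ⟪cfc φ T x, x⟫_ℂ := by
  have hspec : ∀ t ∈ spectrum ℝ T, t ∈ Ici 0 := fun _ ht ↦ spectrum_nonneg_of_nonneg hT ht
  refine le_of_forall_lt_imp_le_of_dense fun a ha ↦ ?_
  obtain ⟨c, c', hcc', rfl⟩ := hφ.exists_affine_le_of_lt_real
    (((nonneg_iff_isPositive T).mp hT).re_inner_nonneg_left x) ha isClosed_Ici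
    hφc.lowerSemicontinuousOn
  have hle : c • T + c' • (1 : H →L[ℂ] H) ≤ cfc φ T := by
    have : cfc (fun t ↦ c * t + c') T = c • T + c' • 1 := by
      rw [cfc_add .., cfc_const_mul .., cfc_id' ℝ T, cfc_const c' T, Algebra.algebraMap_eq_smul_one]
    rw [← this]
    exact cfc_mono (fun t ht ↦ hcc' t (hspec t ht)) (by fun_prop) (hφc.mono hspec)
  simpa [re_inner_smul_add_smul_apply, inner_self_eq_norm_sq, hx] using
    re_inner_apply_le_of_le hle x

lemma map_norm_inner_sq_le_re_inner_cfc_adjoint_mul_self {φ : ℝ → ℝ}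
    (hφ : ConvexOn ℝ (Ici 0) φ) (hφc : ContinuousOn φ (Ici 0)) (hφm : MonotoneOn φ (Ici 0))
    (A : H →L[ℂ] H) {x : H} (hx : ‖x‖ = 1) :
    φ (‖⟪A x, x⟫_ℂ‖ ^ 2) ≤ re ⟪cfc φ (A† * A) x, x⟫_ℂ := by
  have hAx : ‖⟪A x, x⟫_ℂ‖ ^ 2 ≤ re ⟪(A† * A) x, x⟫_ℂ := by
    rw [mul_apply_eq_comp, adjoint_inner_left, inner_self_eq_norm_sq]
    gcongr
    simpa [hx] using norm_inner_le_norm (𝕜 := ℂ) (A x) x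
  calc φ (‖⟪A x, x⟫_ℂ‖ ^ 2) ≤ φ (re ⟪(A† * A) x, x⟫_ℂ) :=
        hφm (mem_Ici.2 (sq_nonneg _)) (mem_Ici.2 ((sq_nonneg _).trans hAx)) hAx
    _ ≤ re ⟪cfc φ (A† * A) x, x⟫_ℂ := by
        refine hφ.map_re_inner_le_re_inner_cfc hφc ?_ hx
        rw [← star_eq_adjoint]
        exact star_mul_self_nonneg A

lemma map_norm_inner_sq_le_re_inner_cfc_mul_adjoint_self {φ : ℝ → ℝ}
    (hφ : ConvexOn ℝ (Ici 0) φ) (hφc : ContinuousOn φ (Ici 0)) (hφm : MonotoneOn φ (Ici 0))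
    (A : H →L[ℂ] H) {x : H} (hx : ‖x‖ = 1) :
    φ (‖⟪A x, x⟫_ℂ‖ ^ 2) ≤ re ⟪cfc φ (A * A†) x, x⟫_ℂ := by
  have hA : ‖⟪(A†) x, x⟫_ℂ‖ = ‖⟪A x, x⟫_ℂ‖ := by
    rw [adjoint_inner_left, norm_inner_symm]
  simpa [hA] using map_norm_inner_sq_le_re_inner_cfc_adjoint_mul_self hφ hφc hφm (A†) hx

theorem stmt13 (A : H →L[ℂ] H) (φ : ℝ → ℝ) (hφ : IsOrliczFunction φ)
    (α : ℝ) (hα : α ∈ Set.Ioo (0 : ℝ) 1) :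
    φ (numRad A ^ 2) ≤
      ‖α • cfc φ (ContinuousLinearMap.adjoint A * A) +
        (1 - α) • cfc φ (A * ContinuousLinearMap.adjoint A)‖ := by
  obtain ⟨hφ, hφc, hφm, hφ₀, -, -⟩ := hφ
  have hsq : ContinuousOn (fun t : ℝ ↦ φ (t ^ 2)) (Ici 0) :=
    hφc.comp (continuous_pow 2).continuousOn fun t _ ↦ sq_nonneg t
  refine hsq.map_ciSup_le_of_nonneg (fun _ ↦ norm_nonneg _)
    (bddAbove_range_norm_inner_apply_self A) (fun ⟨x, hx⟩ ↦ ?_) (by simp [hφ₀])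
  calc φ (‖⟪A x, x⟫_ℂ‖ ^ 2)
      = α * φ (‖⟪A x, x⟫_ℂ‖ ^ 2) + (1 - α) * φ (‖⟪A x, x⟫_ℂ‖ ^ 2) := by ring
    _ ≤ α * re ⟪cfc φ (A† * A) x, x⟫_ℂ + (1 - α) * re ⟪cfc φ (A * A†) x, x⟫_ℂ := by
        gcongr ?_ * ?_ + ?_ * ?_
        · exact hα.1.le
        · exact map_norm_inner_sq_le_re_inner_cfc_adjoint_mul_self hφ hφc hφm A hx
        · exact sub_nonneg.2 hα.2.le
        · exact map_norm_inner_sq_le_re_inner_cfc_mul_adjoint_self hφ hφc hφm A hx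
    _ = re ⟪(α • cfc φ (A† * A) + (1 - α) • cfc φ (A * A†)) x, x⟫_ℂ :=
        (re_inner_smul_add_smul_apply _ _ _ _ x).symm
    _ ≤ _ := re_inner_apply_le_opNorm _ hx
end
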